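/- arXiv:1303.4222 — 2 statements merged into one kernel-verified Lean document; each statement's English description precedes it below -/
import Mathlib

section
/- Let I : (0,∞) → (0,∞) be locally Lipschitz with I(t₁)-I(t₀) = ∫_{t₀}^{t₁} I'(s) ds for 0 < t₀ ≤ t₁, and suppose Ch := inf_{t>0} I(t)/t satisfies Ch < I(t)/t for every t > 0 and lim_{t→∞} I(t)/t = Ch. Then for every n ∈ ℕ there exists Tₙ > n with left derivative I'₋(Tₙ) < Ch + 2/n. In particular liminf_{t→∞} I'₋(t) ≤ Ch. -/
/-!
If every left derivative of `I` beyond `n` were at least `c = Ch + 2/n > Ch`, then, `I` being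
continuous, `I t - I n ≥ c (t - n)` for `t ≥ n` (a reflected Dini-type mean value inequality),
so `I t / t` could not tend to `Ch < c`.
-/

open Set Filter Topology

theorem HasDerivWithinAt.comp_neg_Ici {f : ℝ → ℝ} {f' x : ℝ}
    (h : HasDerivWithinAt f f' (Iic (-x)) (-x)) :
    HasDerivWithinAt (fun u => f (-u)) (-f') (Ici x) x := by
  simpa [Function.comp_def] using
    h.scomp x (hasDerivWithinAt_neg x (Ici x)) fun _ hu => neg_le_neg (mem_Ici.1 hu)

theorem mul_sub_le_sub_of_forall_le_hasDerivWithinAt_Iic {f : ℝ → ℝ} {a b c : ℝ} (hab : a ≤ b)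
    (hf : ContinuousOn f (Icc a b))
    (hf' : ∀ x ∈ Ioc a b, ∃ d, HasDerivWithinAt f d (Iic x) x ∧ c ≤ d) :
    c * (b - a) ≤ f b - f a := by
  -- `u ↦ f (-u)` has right derivatives `≤ -c` on `[-b, -a)`, so it stays below the line
  -- through `(-b, f b)` of slope `-c`.
  have key := image_le_of_liminf_slope_right_le_deriv_boundary (a := -b) (b := -a)
    (f := fun u => f (-u)) (B := fun u => f b - c * (u + b)) (B' := fun _ => -c)
    (hf.comp continuousOn_neg fun u hu => ⟨by linarith [hu.2], by linarith [hu.1]⟩)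
    (by simp) (by fun_prop)
    (fun u _ => by simpa using ((hasDerivAt_id u).add_const b |>.const_mul c
      |>.const_sub (f b)).hasDerivWithinAt)
    (fun u hu r hr => by
      obtain ⟨d, hd, hcd⟩ := hf' (-u) ⟨by linarith [hu.2], by linarith [hu.1]⟩
      exact (HasDerivWithinAt.comp_neg_Ici (by simpa using hd)).liminf_right_slope_le
        (by linarith))
    (x := -a) ⟨by linarith, le_rfl⟩
  simp only [neg_neg] at key
  linarith

theorem exists_mem_Ioc_forall_hasDerivWithinAt_Iic_lt {f : ℝ → ℝ} {a b c : ℝ} (hab : a ≤ b)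
    (hf : ContinuousOn f (Icc a b)) (hlt : f b - f a < c * (b - a)) :
    ∃ x ∈ Ioc a b, ∀ d, HasDerivWithinAt f d (Iic x) x → d < c := by
  by_contra! h
  exact (mul_sub_le_sub_of_forall_le_hasDerivWithinAt_Iic hab hf h).not_gt hlt

theorem tendsto_sub_mul_atBot_of_tendsto_div {f : ℝ → ℝ} {L c : ℝ}
    (h : Tendsto (fun t => f t / t) atTop (𝓝 L)) (hLc : L < c) :
    Tendsto (fun t => f t - c * t) atTop atBot := by
  refine (tendsto_id.atTop_mul_neg (sub_neg.2 hLc) (h.sub_const c)).congr' ?_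
  filter_upwards [eventually_gt_atTop 0] with t ht
  simp only [id]
  field_simp

theorem stmt_3_general (I : ℝ → ℝ) (Ch : ℝ)
    (hLip : ∀ a b : ℝ, 0 < a → ∃ K : NNReal, LipschitzOnWith K I (Set.Icc a b))
    (hlim : Filter.Tendsto (fun t => I t / t) Filter.atTop (nhds Ch)) :
    ∀ n : ℕ, 0 < n → ∃ T : ℝ, (n : ℝ) < T ∧
      ∀ d : ℝ, HasDerivWithinAt I d (Set.Iic T) T → d < Ch + 2 / n := by
  intro n hn
  have hn₀ : (0 : ℝ) < n := by exact_mod_cast hn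
  have hCh : Ch < Ch + 2 / n := lt_add_of_pos_right Ch (by positivity)
  obtain ⟨b, hb, hnb⟩ := (((tendsto_sub_mul_atBot_of_tendsto_div hlim hCh).eventually_lt_atBot
    (I n - (Ch + 2 / n) * n)).and (eventually_ge_atTop (n : ℝ))).exists
  obtain ⟨K, hK⟩ := hLip n b hn₀
  obtain ⟨T, hT, hTd⟩ :=
    exists_mem_Ioc_forall_hasDerivWithinAt_Iic_lt (c := Ch + 2 / n) hnb hK.continuousOn
      (by linarith)
  exact ⟨T, hT.1, hTd⟩

/-- If `I : (0,∞) → (0,∞)` is locally Lipschitz, satisfies the fundamental theorem of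
calculus, has left derivatives everywhere, `Ch = inf_{t>0} I t / t` with `Ch < I t / t`
for all `t`, and `I t / t → Ch`, then for every `n` there is `Tₙ > n` whose left
derivative is less than `Ch + 2/n`. -/
theorem stmt_3 (I : ℝ → ℝ) (Ch : ℝ)
    (hCh : Ch = sInf {x : ℝ | ∃ s : ℝ, 0 < s ∧ x = I s / s})
    (hpos : ∀ t : ℝ, 0 < t → 0 < I t)
    (hLip : ∀ a b : ℝ, 0 < a → ∃ K : NNReal, LipschitzOnWith K I (Set.Icc a b))
    (hFTC : ∀ t₀ t₁ : ℝ, 0 < t₀ → t₀ ≤ t₁ →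
      I t₁ - I t₀ = ∫ t in t₀..t₁, deriv I t)
    (hleft : ∀ t : ℝ, 0 < t → ∃ d : ℝ, HasDerivWithinAt I d (Set.Iic t) t)
    (hstrict : ∀ t : ℝ, 0 < t → Ch < I t / t)
    (hlim : Filter.Tendsto (fun t => I t / t) Filter.atTop (nhds Ch)) :
    ∀ n : ℕ, 0 < n → ∃ T : ℝ, (n : ℝ) < T ∧
      ∀ d : ℝ, HasDerivWithinAt I d (Set.Iic T) T → d < Ch + 2 / n :=
  stmt_3_general I Ch hLip hlim
end

section
/- Let I : (0,∞) → (0,∞) satisfy: (i) Ch := inf_{t>0} I(t)/t with Ch < I(t)/t for all t > 0, (ii) I is locally Lipschitz with I(t₁)-I(t₀)=∫_{t₀}^{t₁} I' a.e., (iii) there exists V₀ > 0 such that I'₊(t) ≤ Ch/2 for all t ≥ V₀ (at points where the right derivative exists). Then Ch = 0. -/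
open Set

/-- The junk value `deriv f t = 0` at points of non-differentiability is why `0 ≤ c` is needed. -/
theorem deriv_le_of_forall_hasDerivWithinAt_Ici_le {f : ℝ → ℝ} {t c : ℝ} (hc : 0 ≤ c)
    (h : ∀ d, HasDerivWithinAt f d (Ici t) t → d ≤ c) : deriv f t ≤ c := by
  by_cases hf : DifferentiableAt ℝ f t
  · exact h _ hf.hasDerivAt.hasDerivWithinAt
  · rwa [deriv_zero_of_not_differentiableAt hf]

theorem intervalIntegral_le_mul_of_le {f : ℝ → ℝ} {a b c : ℝ} (hab : a ≤ b) (hc : 0 ≤ c)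
    (h : ∀ x ∈ Icc a b, f x ≤ c) : ∫ x in a..b, f x ≤ c * (b - a) := by
  by_cases hf : IntervalIntegrable f MeasureTheory.volume a b
  · calc ∫ x in a..b, f x ≤ ∫ _ in a..b, c :=
          intervalIntegral.integral_mono_on hab hf intervalIntegrable_const h
      _ = c * (b - a) := by rw [intervalIntegral.integral_const, smul_eq_mul, mul_comm]
  · rw [intervalIntegral.integral_undef hf]
    exact mul_nonneg hc (sub_nonneg.mpr hab)

theorem nonpos_of_forall_ge_mul_lt {c A V : ℝ} (h : ∀ T, V ≤ T → c * T < A) : c ≤ 0 := by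
  by_contra! hc
  have hT := h (max V (A / c)) (le_max_left _ _)
  have : A ≤ c * max V (A / c) := by
    rw [← div_le_iff₀' hc]
    exact le_max_right _ _
  linarith

/-- If `Ch = inf_{t>0} I t / t` is never attained, `I` satisfies the fundamental theorem
of calculus, and all right derivatives of `I` beyond some volume `V₀` are at most `Ch/2`,
then `Ch = 0`. -/
theorem stmt_4 (I : ℝ → ℝ) (Ch : ℝ)
    (hCh : Ch = sInf {x : ℝ | ∃ s : ℝ, 0 < s ∧ x = I s / s})
    (hpos : ∀ t : ℝ, 0 < t → 0 < I t)
    (hstrict : ∀ t : ℝ, 0 < t → Ch < I t / t)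
    (hFTC : ∀ t₀ t₁ : ℝ, 0 < t₀ → t₀ ≤ t₁ →
      I t₁ - I t₀ = ∫ t in t₀..t₁, deriv I t)
    (V₀ : ℝ) (hV₀ : 0 < V₀)
    (hderiv : ∀ t : ℝ, V₀ ≤ t → ∀ d : ℝ,
      HasDerivWithinAt I d (Set.Ici t) t → d ≤ Ch / 2) :
    Ch = 0 := by
  have hCh_nonneg : 0 ≤ Ch := by
    rw [hCh]
    refine Real.sInf_nonneg ?_
    rintro _ ⟨s, hs, rfl⟩
    exact (div_pos (hpos s hs) hs).le
  have hgrowth : ∀ T, V₀ ≤ T → I T ≤ I V₀ + Ch / 2 * (T - V₀) := fun T hT => by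
    have := intervalIntegral_le_mul_of_le hT (by linarith) fun t ht =>
      deriv_le_of_forall_hasDerivWithinAt_Ici_le (by linarith) (hderiv t ht.1)
    linarith [hFTC V₀ T hV₀ hT]
  -- `Ch T < I T` grows like `Ch T` while `I T` grows at most like `Ch T / 2`.
  have hCh_nonpos : Ch / 2 ≤ 0 := by
    refine nonpos_of_forall_ge_mul_lt (A := I V₀ - Ch / 2 * V₀) (V := V₀) fun T hT => ?_
    have hT₀ : 0 < T := hV₀.trans_le hT
    have := (lt_div_iff₀ hT₀).mp (hstrict T hT₀)
    linarith [hgrowth T hT]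
  linarith
end
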